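/- Suppose L : ℝ^d → ℝ is differentiable with L-Lipschitz gradient and bounded below by L(θ*). Consider SGD updates θ_{t+1} = θ_t − α_t g_t for t = 1,…,T, where conditional on θ_t, g_t is an unbiased estimate of ∇L(θ_t) with E‖g_t − ∇L(θ_t)‖² ≤ σ². If 0 < α_t < 2/L for all t, then ∑_{t=1}^T (2α_t − Lα_t²)·E‖∇L(θ_t)‖² ≤ 2(L(θ_1) − L(θ*)) + Lσ² ∑_{t=1}^T α_t². -/

import Mathlib

/-! The descent lemma bounds one SGD step pointwise:
`𝓛 (θ - α g) ≤ 𝓛 θ - α ⟪∇𝓛 θ, g⟫ + L/2 α² ‖g‖²`. In expectation, unbiasedness (through the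
pull-out property of the conditional expectation given `θ`) turns `E⟪∇𝓛 θ, g⟫` into
`E‖∇𝓛 θ‖²` and bounds `E‖g‖²` by `σ² + E‖∇𝓛 θ‖²`. The resulting per-step inequality telescopes,
and `E 𝓛 (θ (T+1)) ≥ 𝓛 θstar`. All expectations are finite because the iterates are square
integrable, `∇𝓛` grows at most linearly and `𝓛` at most quadratically. -/

open MeasureTheory Finset
open scoped RealInnerProductSpace

section Descent

variable {E : Type*} [NormedAddCommGroup E] [InnerProductSpace ℝ E] [CompleteSpace E]
  {f : E → ℝ} {L : ℝ}

theorem apply_add_le_of_lipschitz_gradient (hdiff : Differentiable ℝ f)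
    (hlip : ∀ x y, ‖gradient f x - gradient f y‖ ≤ L * ‖x - y‖) (x v : E) :
    f (x + v) ≤ f x + ⟪gradient f x, v⟫ + L / 2 * ‖v‖ ^ 2 := by
  set ψ : ℝ → ℝ := fun s => f (x + s • v) - s * ⟪gradient f x, v⟫ - L / 2 * ‖v‖ ^ 2 * s ^ 2
  have hψ : ∀ s,
      HasDerivAt ψ (⟪gradient f (x + s • v) - gradient f x, v⟫ - L * ‖v‖ ^ 2 * s) s := by
    intro s
    have hline : HasDerivAt (fun s : ℝ => x + s • v) v s := by
      simpa using ((hasDerivAt_id s).smul_const v).const_add x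
    have hfline : HasDerivAt (fun s : ℝ => f (x + s • v)) ⟪gradient f (x + s • v), v⟫ s := by
      simpa [Function.comp_def, InnerProductSpace.toDual_apply_apply] using
        (hdiff (x + s • v)).hasGradientAt.hasFDerivAt.comp_hasDerivAt s hline
    refine ((hfline.sub (hasDerivAt_mul_const ⟪gradient f x, v⟫)).sub
      ((hasDerivAt_pow 2 s).const_mul (L / 2 * ‖v‖ ^ 2))).congr_deriv ?_
    rw [inner_sub_left]
    push_cast
    ring
  have hanti : AntitoneOn ψ (Set.Icc 0 1) := by
    refine antitoneOn_of_deriv_nonpos (convex_Icc 0 1)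
      (fun s _ => (hψ s).continuousAt.continuousWithinAt)
      (fun s _ => (hψ s).differentiableAt.differentiableWithinAt) fun s hs => ?_
    rw [interior_Icc] at hs
    rw [(hψ s).deriv, sub_nonpos]
    calc ⟪gradient f (x + s • v) - gradient f x, v⟫
        ≤ ‖gradient f (x + s • v) - gradient f x‖ * ‖v‖ := real_inner_le_norm _ _
      _ ≤ L * ‖s • v‖ * ‖v‖ := by
        gcongr
        simpa using hlip (x + s • v) x
      _ = L * ‖v‖ ^ 2 * s := by
        rw [norm_smul, Real.norm_of_nonneg hs.1.le]
        ring
  have h01 := hanti (by simp) (by simp) zero_le_one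
  simp only [ψ, zero_smul, add_zero, one_smul, zero_mul, one_mul, sub_zero, one_pow,
    mul_one, ne_eq, OfNat.ofNat_ne_zero, not_false_eq_true, zero_pow] at h01
  linarith

end Descent

section Integrability

variable {Ω E : Type*} [MeasurableSpace Ω] {μ : Measure Ω}

theorem MeasureTheory.MemLp.integrable_inner [NormedAddCommGroup E] [InnerProductSpace ℝ E]
    {X Y : Ω → E} (hX : MemLp X 2 μ) (hY : MemLp Y 2 μ) :
    Integrable (fun ω => ⟪X ω, Y ω⟫) μ :=
  memLp_one_iff_integrable.1 <| hX.of_bilin (fun a b => ⟪a, b⟫) 1 hY (hX.1.inner hY.1)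
    (ae_of_all _ fun ω => by simpa using nnnorm_inner_le_nnnorm (𝕜 := ℝ) (X ω) (Y ω))

theorem LipschitzWith.memLp_comp {F : Type*} [NormedAddCommGroup E] [NormedAddCommGroup F]
    [IsFiniteMeasure μ] {K : NNReal} {g : E → F} (hg : LipschitzWith K g) {p : ENNReal}
    {X : Ω → E} (hX : MemLp X p μ) : MemLp (fun ω => g (X ω)) p μ := by
  convert ((hg.sub (LipschitzWith.const (g 0))).comp_memLp (by simp) hX).add (memLp_const (g 0))
    using 1
  ext ω
  simp

theorem integrable_comp_of_lipschitz_gradient [NormedAddCommGroup E] [InnerProductSpace ℝ E]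
    [CompleteSpace E] [IsFiniteMeasure μ] {f : E → ℝ} {L : ℝ} (hdiff : Differentiable ℝ f)
    (hlip : ∀ x y, ‖gradient f x - gradient f y‖ ≤ L * ‖x - y‖) {x₀ : E}
    (hbelow : ∀ x, f x₀ ≤ f x) {X : Ω → E} (hX : MemLp X 2 μ) :
    Integrable (fun ω => f (X ω)) μ :=
  integrable_of_le_of_le (g₁ := fun _ => f x₀)
    (g₂ := fun ω => f 0 + ⟪gradient f 0, X ω⟫ + L / 2 * ‖X ω‖ ^ 2)
    (hdiff.continuous.comp_aestronglyMeasurable hX.1) (ae_of_all _ fun ω => hbelow (X ω))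
    (ae_of_all _ fun ω => by simpa using apply_add_le_of_lipschitz_gradient hdiff hlip 0 (X ω))
    (integrable_const _)
    (((integrable_const _).add ((hX.integrable one_le_two).const_inner _)).add
      (((memLp_two_iff_integrable_sq_norm hX.1).1 hX).const_mul _))

end Integrability

section CondExp

variable {Ω E : Type*} {m mΩ : MeasurableSpace Ω} {μ : Measure Ω}
  [NormedAddCommGroup E] [InnerProductSpace ℝ E] [CompleteSpace E]

theorem integral_inner_condExp (hm : m ≤ mΩ) [SigmaFinite (μ.trim hm)] {F G : Ω → E}
    (hF : StronglyMeasurable[m] F) (hFG : Integrable (fun ω => ⟪F ω, G ω⟫) μ)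
    (hG : Integrable G μ) :
    ∫ ω, ⟪F ω, G ω⟫ ∂μ = ∫ ω, ⟪F ω, (μ[G|m]) ω⟫ ∂μ := by
  rw [← integral_condExp hm]
  exact integral_congr_ae (condExp_bilin_of_stronglyMeasurable_left (innerSL ℝ) hF hFG hG)

variable [IsFiniteMeasure μ] {F G : Ω → E}

theorem integral_inner_eq_integral_norm_sq_of_condExp_eq (hm : m ≤ mΩ)
    (hF : StronglyMeasurable[m] F) (hF2 : MemLp F 2 μ) (hG2 : MemLp G 2 μ)
    (hcond : μ[G|m] =ᵐ[μ] F) :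
    ∫ ω, ⟪F ω, G ω⟫ ∂μ = ∫ ω, ‖F ω‖ ^ 2 ∂μ := by
  have := isFiniteMeasure_trim (μ := μ) hm
  rw [integral_inner_condExp hm hF (hF2.integrable_inner hG2) (hG2.integrable one_le_two)]
  refine integral_congr_ae ?_
  filter_upwards [hcond] with ω hω
  rw [hω, real_inner_self_eq_norm_sq]

theorem integral_norm_sq_eq_of_condExp_eq (hm : m ≤ mΩ)
    (hF : StronglyMeasurable[m] F) (hF2 : MemLp F 2 μ) (hG2 : MemLp G 2 μ)
    (hcond : μ[G|m] =ᵐ[μ] F) :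
    ∫ ω, ‖G ω‖ ^ 2 ∂μ = ∫ ω, ‖G ω - F ω‖ ^ 2 ∂μ + ∫ ω, ‖F ω‖ ^ 2 ∂μ := by
  have hsq : ∀ {H : Ω → E}, MemLp H 2 μ → Integrable (fun ω => ‖H ω‖ ^ 2) μ :=
    fun hH => (memLp_two_iff_integrable_sq_norm hH.1).1 hH
  have hexpand : ∀ ω, ‖G ω - F ω‖ ^ 2 = ‖G ω‖ ^ 2 - 2 * ⟪F ω, G ω⟫ + ‖F ω‖ ^ 2 := fun ω => by
    rw [norm_sub_sq_real, real_inner_comm]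
  simp_rw [hexpand]
  have hcross := (hF2.integrable_inner hG2).const_mul 2
  rw [integral_add ((hsq hG2).sub' hcross) (hsq hF2), integral_sub (hsq hG2) hcross,
    integral_const_mul, integral_inner_eq_integral_norm_sq_of_condExp_eq hm hF hF2 hG2 hcond]
  ring

end CondExp

theorem integral_sgd_step_le {Ω E : Type*} {m mΩ : MeasurableSpace Ω} {μ : Measure Ω}
    [IsFiniteMeasure μ] [NormedAddCommGroup E] [InnerProductSpace ℝ E] [CompleteSpace E]
    {f : E → ℝ} {L σ : ℝ} (hL : 0 ≤ L) (hdiff : Differentiable ℝ f)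
    (hlip : ∀ x y, ‖gradient f x - gradient f y‖ ≤ L * ‖x - y‖) {x₀ : E}
    (hbelow : ∀ x, f x₀ ≤ f x) (hm : m ≤ mΩ) {X G : Ω → E} (hX : MemLp X 2 μ)
    (hXm : StronglyMeasurable[m] X) (hG : MemLp G 2 μ)
    (hcond : μ[G|m] =ᵐ[μ] fun ω => gradient f (X ω))
    (hvar : ∫ ω, ‖G ω - gradient f (X ω)‖ ^ 2 ∂μ ≤ σ ^ 2) (α : ℝ) :
    (2 * α - L * α ^ 2) * ∫ ω, ‖gradient f (X ω)‖ ^ 2 ∂μ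
      ≤ 2 * (∫ ω, f (X ω) ∂μ - ∫ ω, f (X ω - α • G ω) ∂μ) + L * σ ^ 2 * α ^ 2 := by
  have hgrad : LipschitzWith (Real.toNNReal L) (gradient f) :=
    LipschitzWith.of_dist_le' fun x y => by simpa only [dist_eq_norm] using hlip x y
  have hF2 : MemLp (fun ω => gradient f (X ω)) 2 μ := hgrad.memLp_comp hX
  have hFm : StronglyMeasurable[m] fun ω => gradient f (X ω) :=
    hgrad.continuous.comp_stronglyMeasurable hXm
  have hfirst := integral_inner_eq_integral_norm_sq_of_condExp_eq hm hFm hF2 hG hcond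
  have hsecond := integral_norm_sq_eq_of_condExp_eq hm hFm hF2 hG hcond
  have hpointwise : ∀ ω, f (X ω - α • G ω) ≤ f (X ω) - α * ⟪gradient f (X ω), G ω⟫
      + L / 2 * α ^ 2 * ‖G ω‖ ^ 2 := fun ω => by
    have := apply_add_le_of_lipschitz_gradient hdiff hlip (X ω) (-(α • G ω))
    rw [← sub_eq_add_neg, inner_neg_right, real_inner_smul_right, norm_neg, norm_smul,
      Real.norm_eq_abs, mul_pow, sq_abs] at this
    linarith
  have hinner := (hF2.integrable_inner hG).const_mul α
  have hsq := ((memLp_two_iff_integrable_sq_norm hG.1).1 hG).const_mul (L / 2 * α ^ 2)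
  have hf := integrable_comp_of_lipschitz_gradient hdiff hlip hbelow hX
  have hmono : ∫ ω, f (X ω - α • G ω) ∂μ ≤ ∫ ω, (f (X ω) - α * ⟪gradient f (X ω), G ω⟫
      + L / 2 * α ^ 2 * ‖G ω‖ ^ 2) ∂μ :=
    integral_mono (integrable_comp_of_lipschitz_gradient hdiff hlip hbelow
      (hX.sub (hG.const_smul α))) ((hf.sub' hinner).fun_add hsq) hpointwise
  rw [integral_add (hf.sub' hinner) hsq, integral_sub hf hinner, integral_const_mul,
    integral_const_mul, hfirst, hsecond] at hmono
  have hnoise := mul_le_mul_of_nonneg_left hvar (by positivity : 0 ≤ L * α ^ 2)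
  linarith

section Iterates

variable {Ω E : Type*} [MeasurableSpace Ω] [NormedAddCommGroup E] [NormedSpace ℝ E]
  {θ g : ℕ → Ω → E} {α : ℕ → ℝ}

theorem measurable_direction_of_update [MeasurableSpace E] [BorelSpace E]
    [SecondCountableTopology E]
    (hupdate : ∀ t ω, θ (t + 1) ω = θ t ω - α t • g t ω) (hα : ∀ t, α t ≠ 0)
    (hθ : ∀ t, Measurable (θ t)) (t : ℕ) : Measurable (g t) := by
  have hg : g t = fun ω => (α t)⁻¹ • (θ t ω - θ (t + 1) ω) := by
    funext ω
    rw [hupdate, sub_sub_cancel, smul_smul, inv_mul_cancel₀ (hα t), one_smul]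
  rw [hg]
  exact ((hθ t).sub (hθ (t + 1))).const_smul (α t)⁻¹

theorem memLp_iterate_of_update {μ : Measure Ω} {p : ENNReal}
    (hupdate : ∀ t ω, θ (t + 1) ω = θ t ω - α t • g t ω) {t₀ : ℕ} (hθ₀ : MemLp (θ t₀) p μ)
    (hg : ∀ t, MemLp (g t) p μ) {t : ℕ} (ht : t₀ ≤ t) : MemLp (θ t) p μ := by
  induction t, ht using Nat.le_induction with
  | base => exact hθ₀
  | succ t _ ih => rw [funext (hupdate t)]; exact ih.sub ((hg t).const_smul (α t))

end Iterates

theorem sum_Icc_le_sub_add_sum {a b c : ℕ → ℝ} {T : ℕ}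
    (h : ∀ t ∈ Icc 1 T, a t ≤ b t - b (t + 1) + c t) :
    ∑ t ∈ Icc 1 T, a t ≤ b 1 - b (T + 1) + ∑ t ∈ Icc 1 T, c t := by
  induction T with
  | zero => simp
  | succ T ih =>
    rw [sum_Icc_succ_top (by omega), sum_Icc_succ_top (by omega)]
    have hlast := h (T + 1) (by simp)
    have hprefix := ih fun t ht => h t (by simp only [mem_Icc] at ht ⊢; omega)
    linarith

/-- SGD bound: if `𝓛` is differentiable with `L`-Lipschitz gradient and bounded below
by `𝓛 θstar`, and `θ (t+1) = θ t − α t • g t` where, conditional on `θ t`, `g t` is an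
unbiased estimate of `∇𝓛 (θ t)` with variance at most `σ²`, and `0 < α t < 2/L`, then
`∑_{t=1}^T (2 α t − L (α t)²) E‖∇𝓛(θ t)‖² ≤ 2(𝓛 θ₁ − 𝓛 θstar) + L σ² ∑_{t=1}^T (α t)²`. -/
theorem sgd_sum_bound {d : ℕ} {Ω : Type*} [MeasurableSpace Ω]
    (μ : Measure Ω) [IsProbabilityMeasure μ]
    (𝓛 : EuclideanSpace ℝ (Fin d) → ℝ) (L σ : ℝ) (hL : 0 < L)
    (hdiff : Differentiable ℝ 𝓛)
    (hlip : ∀ x y, ‖gradient 𝓛 x - gradient 𝓛 y‖ ≤ L * ‖x - y‖)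
    (θstar : EuclideanSpace ℝ (Fin d)) (hbelow : ∀ x, 𝓛 θstar ≤ 𝓛 x)
    (T : ℕ) (α : ℕ → ℝ) (hα : ∀ t, 0 < α t ∧ α t < 2 / L)
    (θ g : ℕ → Ω → EuclideanSpace ℝ (Fin d))
    (θ₁ : EuclideanSpace ℝ (Fin d)) (hinit : θ 1 = fun _ => θ₁)
    (hupdate : ∀ t ω, θ (t + 1) ω = θ t ω - α t • g t ω)
    (hmeas : ∀ t, Measurable (θ t))
    (hunbiased : ∀ t,
      μ[g t | MeasurableSpace.comap (θ t) (by infer_instance)]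
        =ᵐ[μ] fun ω => gradient 𝓛 (θ t ω))
    (hvar : ∀ t, ∫ ω, ‖g t ω - gradient 𝓛 (θ t ω)‖ ^ 2 ∂μ ≤ σ ^ 2)
    (hint : ∀ t, Integrable (fun ω => ‖g t ω‖ ^ 2) μ) :
    ∑ t ∈ Finset.Icc 1 T,
        (2 * α t - L * α t ^ 2) * ∫ ω, ‖gradient 𝓛 (θ t ω)‖ ^ 2 ∂μ
      ≤ 2 * (𝓛 θ₁ - 𝓛 θstar) + L * σ ^ 2 * ∑ t ∈ Finset.Icc 1 T, α t ^ 2 := by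
  have hg2 : ∀ t, MemLp (g t) 2 μ := fun t =>
    (memLp_two_iff_integrable_sq_norm (measurable_direction_of_update hupdate
      (fun t => (hα t).1.ne') hmeas t).aestronglyMeasurable).2 (hint t)
  have hθ2 : ∀ t, 1 ≤ t → MemLp (θ t) 2 μ := fun t =>
    memLp_iterate_of_update hupdate (by rw [hinit]; exact memLp_const θ₁) hg2
  have hstep : ∀ t ∈ Icc 1 T, (2 * α t - L * α t ^ 2) * ∫ ω, ‖gradient 𝓛 (θ t ω)‖ ^ 2 ∂μ
      ≤ 2 * ∫ ω, 𝓛 (θ t ω) ∂μ - 2 * ∫ ω, 𝓛 (θ (t + 1) ω) ∂μ + L * σ ^ 2 * α t ^ 2 := by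
    intro t ht
    have hdescent := integral_sgd_step_le hL.le hdiff hlip hbelow (measurable_iff_comap_le.1 (hmeas t))
      (hθ2 t (mem_Icc.1 ht).1) (comap_measurable (θ t)).stronglyMeasurable (hg2 t)
      (hunbiased t) (hvar t) (α t)
    rw [funext (hupdate t)]
    linarith
  have hlow : 𝓛 θstar ≤ ∫ ω, 𝓛 (θ (T + 1) ω) ∂μ := by
    simpa using integral_mono (integrable_const _)
      (integrable_comp_of_lipschitz_gradient hdiff hlip hbelow (hθ2 (T + 1) (by omega)))
      fun ω => hbelow (θ (T + 1) ω)
  have hstart : ∫ ω, 𝓛 (θ 1 ω) ∂μ = 𝓛 θ₁ := by simp [hinit]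
  have htelescope := sum_Icc_le_sub_add_sum hstep
  rw [hstart, ← mul_sum] at htelescope
  linarith
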